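/- arXiv:2210.05955 — 4 statements merged into one kernel-verified Lean document; each statement's English description precedes it below -/
import Mathlib

section
/- Let A be a real d×d matrix with d distinct real eigenvalues λ₁,...,λ_d, and let x₀ ∈ ℝ^d be such that {x₀, Ax₀, ..., A^{d-1}x₀} is linearly independent. Then for any Δt > 0 and any t₁ ≥ 0, the d vectors x_j = exp(A t_j) x₀, where t_j = t₁ + (j-1)Δt for j = 1,...,d, are linearly independent (equivalently, the matrix with columns x₁,...,x_d is invertible). -/
open Matrix

/-!
In an eigenbasis `Q` of `A`, with `y = Q⁻¹ x₀`, both the Krylov vectors `Aʲ x₀` and the samples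
`exp(t_j A) x₀` are the columns of a matrix `Q · diag(c) · V(ν)` with `V(ν)` the Vandermonde matrix
of distinct nodes: `c = y`, `ν = λ` for the Krylov vectors and `c = y · e^{λ t₁}`, `ν = e^{λ Δt}`
for the samples. Such a matrix is invertible iff every `c i ≠ 0`, so independence of the Krylov
vectors forces `y i ≠ 0`, which in turn gives independence of the samples.
-/

namespace Matrix

variable {K : Type*} [Field K] {d : ℕ}

theorem conj_pow_of_isUnit {Q : Matrix (Fin d) (Fin d) K} (hQ : IsUnit Q)
    (D : Matrix (Fin d) (Fin d) K) (k : ℕ) : (Q * D * Q⁻¹) ^ k = Q * D ^ k * Q⁻¹ := by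
  obtain ⟨u, rfl⟩ := hQ
  simpa only [coe_units_inv] using Units.conj_pow u D k

theorem conj_diagonal_mulVec (Q : Matrix (Fin d) (Fin d) K) (μ x : Fin d → K) :
    (Q * diagonal μ * Q⁻¹) *ᵥ x = Q *ᵥ fun i => (Q⁻¹ *ᵥ x) i * μ i := by
  rw [← mulVec_mulVec, ← mulVec_mulVec]
  congr 1
  ext i
  rw [mulVec_diagonal, mul_comm]

theorem mulVec_mul_pow_eq_col (Q : Matrix (Fin d) (Fin d) K) (y μ : Fin d → K) (j : Fin d) :
    (Q *ᵥ fun i => y i * μ i ^ (j : ℕ)) = (Q * diagonal y * vandermonde μ).col j := by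
  ext i
  rw [col_apply, Matrix.mul_assoc, mul_apply]
  simp [mulVec, dotProduct, diagonal_mul, vandermonde_apply]

theorem linearIndependent_mulVec_mul_pow_iff {Q : Matrix (Fin d) (Fin d) K} (hQ : IsUnit Q.det)
    {μ : Fin d → K} (hμ : Function.Injective μ) (y : Fin d → K) :
    LinearIndependent K (fun j : Fin d => Q *ᵥ fun i => y i * μ i ^ (j : ℕ)) ↔ ∀ i, y i ≠ 0 := by
  simp only [mulVec_mul_pow_eq_col]
  rw [linearIndependent_cols_iff_isUnit, isUnit_iff_isUnit_det, det_mul, det_mul,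
    det_diagonal, isUnit_iff_ne_zero, mul_ne_zero_iff, mul_ne_zero_iff, Finset.prod_ne_zero_iff]
  simp [hQ.ne_zero, det_vandermonde_ne_zero_iff.2 hμ]

theorem exp_smul_conj_diagonal {Q : Matrix (Fin d) (Fin d) ℝ} (hQ : IsUnit Q) (μ : Fin d → ℝ)
    (t : ℝ) : NormedSpace.exp (t • (Q * diagonal μ * Q⁻¹)) =
      Q * diagonal (fun i => Real.exp (t * μ i)) * Q⁻¹ := by
  rw [← smul_mul_assoc, ← mul_smul_comm, ← diagonal_smul, exp_conj Q _ hQ, exp_diagonal,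
    Pi.exp_def, Real.exp_eq_exp_ℝ]
  rfl

end Matrix

theorem stmt0_general (d : ℕ) (A Q : Matrix (Fin d) (Fin d) ℝ) (lam : Fin d → ℝ)
    (x₀ : Fin d → ℝ)
    (hQ : IsUnit Q.det)
    (hdiag : A = Q * Matrix.diagonal lam * Q⁻¹)
    (hlam : Function.Injective lam)
    (hKrylov : LinearIndependent ℝ (fun i : Fin d => (A ^ (i : ℕ)).mulVec x₀))
    (Δt t₁ : ℝ) (hΔt : 0 < Δt) :
    LinearIndependent ℝ
      (fun j : Fin d => (NormedSpace.exp ((t₁ + (j : ℕ) * Δt) • A)).mulVec x₀) := by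
  have hQ' : IsUnit Q := (isUnit_iff_isUnit_det Q).2 hQ
  set y := Q⁻¹ *ᵥ x₀ with hy_def
  have hKrylov_eq : (fun j : Fin d => (A ^ (j : ℕ)) *ᵥ x₀) =
      fun j : Fin d => Q *ᵥ fun i => y i * lam i ^ (j : ℕ) := by
    ext1 j
    rw [hdiag, conj_pow_of_isUnit hQ', diagonal_pow, conj_diagonal_mulVec, ← hy_def]
    simp only [Pi.pow_apply]
  have hy : ∀ i, y i ≠ 0 :=
    (linearIndependent_mulVec_mul_pow_iff hQ hlam y).1 (hKrylov_eq ▸ hKrylov)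
  have hexp_eq : (fun j : Fin d => NormedSpace.exp ((t₁ + (j : ℕ) * Δt) • A) *ᵥ x₀) =
      fun j : Fin d =>
        Q *ᵥ fun i => y i * Real.exp (t₁ * lam i) * Real.exp (lam i * Δt) ^ (j : ℕ) := by
    ext1 j
    rw [hdiag, exp_smul_conj_diagonal hQ', conj_diagonal_mulVec, ← hy_def]
    congr 1
    ext i
    rw [mul_assoc, ← Real.exp_nat_mul, ← Real.exp_add]
    ring_nf
  have hexp_inj : Function.Injective fun i => Real.exp (lam i * Δt) := fun i j h =>
    hlam (mul_right_cancel₀ hΔt.ne' (Real.exp_injective h))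
  rw [hexp_eq, linearIndependent_mulVec_mul_pow_iff hQ hexp_inj]
  exact fun i => mul_ne_zero (hy i) (Real.exp_ne_zero _)

/-- If `A` has `d` distinct real eigenvalues (diagonalization
`A = Q Λ Q⁻¹` with injective eigenvalue function `lam`) and the Krylov vectors
`x₀, Ax₀, …, A^{d-1}x₀` are linearly independent, then for any `Δt > 0` and
`t₁ ≥ 0`, the points `exp(A t_j) x₀` with `t_j = t₁ + j Δt`, `j = 0, …, d-1`,
are linearly independent. -/
theorem stmt0 (d : ℕ) (A Q : Matrix (Fin d) (Fin d) ℝ) (lam : Fin d → ℝ)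
    (x₀ : Fin d → ℝ)
    (hQ : IsUnit Q.det)
    (hdiag : A = Q * Matrix.diagonal lam * Q⁻¹)
    (hlam : Function.Injective lam)
    (hKrylov : LinearIndependent ℝ (fun i : Fin d => (A ^ (i : ℕ)).mulVec x₀))
    (Δt t₁ : ℝ) (hΔt : 0 < Δt) (ht₁ : 0 ≤ t₁) :
    LinearIndependent ℝ
      (fun j : Fin d => (NormedSpace.exp ((t₁ + (j : ℕ) * Δt) • A)).mulVec x₀) :=
  stmt0_general d A Q lam x₀ hQ hdiag hlam hKrylov Δt t₁ hΔt
end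

section
/- Let A, A' ∈ ℝ^{d×d} and x₀, x₀' ∈ ℝ^d. If exp(At) x₀ = exp(A't) x₀' for all t ≥ 0, then x₀ = x₀' and, provided {x₀, Ax₀, ..., A^{d-1}x₀} is linearly independent, A = A'. -/
/-!
Differentiating `t ↦ exp(tA) x₀` at `t = 0` gives the vectors `Aⁿ x₀`; equality of the
trajectories on `[0, ∞)` therefore forces `Aⁿ x₀ = A'ⁿ x₀'` for every `n` (derivatives on a
half-line are still unique). The case `n = 0` is `x₀ = x₀'`. The cases `n ≥ 1` say that `A` and
`A'` agree on every Krylov vector `Aⁿ x₀`, and when the first `d` of them are linearly independent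
they span `ℝᵈ`, so `A = A'`.
-/

open Matrix Set NormedSpace

theorem hasDerivAt_eq_of_eqOn_Ici {F : Type*} [NormedAddCommGroup F] [NormedSpace ℝ F]
    {f g : ℝ → F} {f' g' : F} {a t : ℝ} (hfg : EqOn f g (Ici a)) (ht : a ≤ t)
    (hf : HasDerivAt f f' t) (hg : HasDerivAt g g' t) : f' = g' :=
  (uniqueDiffOn_Ici a t ht).eq_deriv _ (hf.hasDerivWithinAt.congr (fun _ hu => (hfg hu).symm)
    (hfg ht).symm) hg.hasDerivWithinAt

section BanachAlgebra

variable {𝔸 F : Type*} [NormedRing 𝔸] [NormedAlgebra ℝ 𝔸] [CompleteSpace 𝔸]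
  [NormedAddCommGroup F] [NormedSpace ℝ F]

theorem hasDerivAt_pow_mul_exp_smul (a : 𝔸) (n : ℕ) (t : ℝ) :
    HasDerivAt (fun u : ℝ => a ^ n * exp (u • a)) (a ^ (n + 1) * exp (t • a)) t := by
  convert (hasDerivAt_exp_smul_const' a t).const_mul (a ^ n) using 1
  rw [pow_succ, mul_assoc]

theorem eqOn_apply_pow_mul_exp_smul {a a' : 𝔸} {L L' : 𝔸 →L[ℝ] F}
    (h : EqOn (fun t : ℝ => L (exp (t • a))) (fun t => L' (exp (t • a'))) (Ici 0)) (n : ℕ) :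
    EqOn (fun t : ℝ => L (a ^ n * exp (t • a))) (fun t => L' (a' ^ n * exp (t • a'))) (Ici 0) := by
  induction n with
  | zero => simpa using h
  | succ n ih =>
    intro t ht
    exact hasDerivAt_eq_of_eqOn_Ici ih ht
      (L.hasFDerivAt.comp_hasDerivAt t (hasDerivAt_pow_mul_exp_smul a n t))
      (L'.hasFDerivAt.comp_hasDerivAt t (hasDerivAt_pow_mul_exp_smul a' n t))

theorem apply_pow_eq_of_eqOn_apply_exp_smul {a a' : 𝔸} {L L' : 𝔸 →L[ℝ] F}
    (h : EqOn (fun t : ℝ => L (exp (t • a))) (fun t => L' (exp (t • a'))) (Ici 0)) (n : ℕ) :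
    L (a ^ n) = L' (a' ^ n) := by
  simpa using eqOn_apply_pow_mul_exp_smul h n self_mem_Ici

end BanachAlgebra

namespace Matrix

variable {ι : Type*} [Fintype ι] [DecidableEq ι]

theorem pow_mulVec_eq_of_exp_smul_mulVec_eq {A A' : Matrix ι ι ℝ} {x x' : ι → ℝ}
    (h : ∀ t : ℝ, 0 ≤ t → exp (t • A) *ᵥ x = exp (t • A') *ᵥ x') (n : ℕ) :
    A ^ n *ᵥ x = A' ^ n *ᵥ x' := by
  -- any Banach algebra norm will do: `exp` depends only on the topology
  let := Matrix.linftyOpNormedRing (n := ι) (α := ℝ)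
  let := Matrix.linftyOpNormedAlgebra (n := ι) (R := ℝ) (α := ℝ)
  exact apply_pow_eq_of_eqOn_apply_exp_smul
    (L := ((mulVecBilin ℝ ℝ).flip x).toContinuousLinearMap)
    (L' := ((mulVecBilin ℝ ℝ).flip x').toContinuousLinearMap) (a := A) (a' := A') h n

theorem eq_of_pow_mulVec_eq {R : Type*} [CommSemiring R] {A B : Matrix ι ι R} {x : ι → R}
    (hspan : Submodule.span R (range fun n : ℕ => A ^ n *ᵥ x) = ⊤)
    (h : ∀ n : ℕ, A ^ n *ᵥ x = B ^ n *ᵥ x) : A = B :=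
  toLin'.injective <| LinearMap.ext_on_range hspan fun n => by
    rw [toLin'_apply, toLin'_apply, mulVec_mulVec, ← pow_succ', h, h n, mulVec_mulVec, ← pow_succ']

end Matrix

open Matrix

/-- If `exp(At)x₀ = exp(A't)x₀'` for all `t ≥ 0`, then `x₀ = x₀'`,
and if moreover the Krylov vectors `x₀, Ax₀, …, A^{d-1}x₀` are linearly
independent, then `A = A'`. -/
theorem stmt5 (d : ℕ) (A A' : Matrix (Fin d) (Fin d) ℝ) (x₀ x₀' : Fin d → ℝ)
    (h : ∀ t : ℝ, 0 ≤ t →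
      (NormedSpace.exp (t • A)).mulVec x₀ = (NormedSpace.exp (t • A')).mulVec x₀') :
    x₀ = x₀' ∧
    (LinearIndependent ℝ (fun i : Fin d => (A ^ (i : ℕ)).mulVec x₀) → A = A') := by
  have hpow := pow_mulVec_eq_of_exp_smul_mulVec_eq h
  have hx : x₀ = x₀' := by simpa using hpow 0
  subst hx
  refine ⟨rfl, fun hli => eq_of_pow_mulVec_eq (top_unique ?_) hpow⟩
  rw [← hli.span_eq_top_of_card_eq_finrank' (by simp)]
  exact Submodule.span_mono (range_subset_iff.2 fun i => ⟨i, rfl⟩)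
end

section
/- Let A ∈ ℝ^{d×d} have d distinct real eigenvalues and x₀ ∈ ℝ^d be such that {x₀, Ax₀, ..., A^{d-1}x₀} is linearly independent. For Δt > 0 and integer k ≥ 2, set x̃₀ = (I + exp(AΔt) + ... + exp((k-1)AΔt))x₀ / k. Then {x̃₀, Ax̃₀, ..., A^{d-1}x̃₀} is linearly independent. -/
open Matrix Finset

/-!
The averaging matrix `B = (1/k) ∑_{m<k} exp(mΔt A)` is diagonal in any eigenbasis of `A`, with
the positive eigenvalues `(1/k) ∑_{m<k} exp(mΔt λᵢ)`. Hence `B` is invertible and commutes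
with `A`, so it maps the Krylov family `(Aⁱ x₀)` of `x₀` bijectively onto the Krylov family
`(Aⁱ B x₀)` of `B x₀`.
-/

namespace Matrix

variable {n : Type*} [Fintype n] [DecidableEq n]

lemma exp_conj_diagonal {Q : Matrix n n ℝ} (hQ : IsUnit Q) (lam : n → ℝ) :
    NormedSpace.exp (Q * diagonal lam * Q⁻¹) =
      Q * diagonal (fun i => Real.exp (lam i)) * Q⁻¹ := by
  rw [exp_conj _ _ hQ, exp_diagonal]
  congr
  funext i
  rw [Pi.coe_exp, Real.exp_eq_exp_ℝ]

lemma sum_exp_smul_conj_diagonal {ι : Type*} {Q : Matrix n n ℝ} (hQ : IsUnit Q) (lam : n → ℝ)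
    (s : Finset ι) (τ : ι → ℝ) :
    ∑ m ∈ s, NormedSpace.exp (τ m • (Q * diagonal lam * Q⁻¹)) =
      Q * diagonal (fun i => ∑ m ∈ s, Real.exp (τ m * lam i)) * Q⁻¹ := by
  have hsmul : ∀ m, τ m • (Q * diagonal lam * Q⁻¹) = Q * diagonal (τ m • lam) * Q⁻¹ := by
    intro m
    rw [diagonal_smul, Matrix.mul_smul, Matrix.smul_mul]
  simp only [hsmul, exp_conj_diagonal hQ, ← sum_mul, ← mul_sum, Pi.smul_apply, smul_eq_mul]
  congr 2
  rw [← sum_fn]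
  exact (map_sum (diagonalAddMonoidHom n ℝ) _ s).symm

lemma isUnit_conj_diagonal {Q : Matrix n n ℝ} (hQ : IsUnit Q) {g : n → ℝ} (hg : ∀ i, g i ≠ 0) :
    IsUnit (Q * diagonal g * Q⁻¹) := by
  refine (hQ.mul ?_).mul (isUnit_nonsing_inv_iff.mpr hQ)
  rw [isUnit_diagonal]
  exact Pi.isUnit_iff.mpr fun i => (hg i).isUnit

lemma isUnit_sum_exp_smul {ι : Type*} {A Q : Matrix n n ℝ} {lam : n → ℝ} (hQ : IsUnit Q)
    (hA : A = Q * diagonal lam * Q⁻¹) {s : Finset ι} (hs : s.Nonempty) (τ : ι → ℝ) :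
    IsUnit (∑ m ∈ s, NormedSpace.exp (τ m • A)) := by
  rw [hA, sum_exp_smul_conj_diagonal hQ]
  exact isUnit_conj_diagonal hQ fun i => (sum_pos (fun m _ => Real.exp_pos _) hs).ne'

lemma commute_sum_exp_smul {ι : Type*} (A : Matrix n n ℝ) (s : Finset ι) (τ : ι → ℝ) :
    Commute A (∑ m ∈ s, NormedSpace.exp (τ m • A)) :=
  Commute.sum_right _ _ _ fun m _ => ((Commute.refl A).smul_right (τ m)).exp_right

lemma linearIndependent_pow_mulVec_of_commute {R ι : Type*} [CommRing R] {A B : Matrix n n R}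
    (hB : IsUnit B) (hAB : Commute A B) {p : ι → ℕ} {x : n → R}
    (h : LinearIndependent R fun i => (A ^ p i) *ᵥ x) :
    LinearIndependent R fun i => (A ^ p i) *ᵥ (B *ᵥ x) := by
  have hinj : LinearMap.ker B.mulVecLin = ⊥ :=
    LinearMap.ker_eq_bot.mpr (mulVec_injective_of_isUnit hB)
  have hfun : (fun i => (A ^ p i) *ᵥ (B *ᵥ x)) = B.mulVecLin ∘ fun i => (A ^ p i) *ᵥ x := by
    funext i
    simp only [Function.comp_apply, mulVecLin_apply, mulVec_mulVec, (hAB.pow_left _).eq]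
  rw [hfun]
  exact h.map' B.mulVecLin hinj

end Matrix

theorem stmt8_general (d : ℕ) (A Q : Matrix (Fin d) (Fin d) ℝ) (lam : Fin d → ℝ)
    (x₀ : Fin d → ℝ)
    (hQ : IsUnit Q.det)
    (hdiag : A = Q * Matrix.diagonal lam * Q⁻¹)
    (hKrylov : LinearIndependent ℝ (fun i : Fin d => (A ^ (i : ℕ)).mulVec x₀))
    (Δt : ℝ) (k : ℕ) (hk : 2 ≤ k) :
    LinearIndependent ℝ (fun i : Fin d =>
      (A ^ (i : ℕ)).mulVec
        (((k : ℝ)⁻¹ •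
          ∑ m ∈ Finset.range k, NormedSpace.exp (((m : ℝ) * Δt) • A)).mulVec x₀)) := by
  have hk₀ : (k : ℝ)⁻¹ ≠ 0 := by positivity
  have hsum := isUnit_sum_exp_smul ((isUnit_iff_isUnit_det Q).mpr hQ) hdiag
    (nonempty_range_iff.mpr (by omega : k ≠ 0)) (fun m : ℕ => (m : ℝ) * Δt)
  have hunit : IsUnit ((k : ℝ)⁻¹ • ∑ m ∈ range k, NormedSpace.exp (((m : ℝ) * Δt) • A)) := by
    rw [isUnit_iff_isUnit_det, det_smul]
    exact (hk₀.isUnit.pow _).mul ((isUnit_iff_isUnit_det _).mp hsum)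
  exact linearIndependent_pow_mulVec_of_commute (p := Fin.val) hunit
    ((commute_sum_exp_smul A _ _).smul_right _) hKrylov

/-- With `A` having `d` distinct real eigenvalues and Krylov
independence for `x₀`, the aggregated initial condition
`x̃₀ = (I + exp(AΔt) + ⋯ + exp((k-1)AΔt)) x₀ / k` again satisfies the Krylov
independence condition. -/
theorem stmt8 (d : ℕ) (A Q : Matrix (Fin d) (Fin d) ℝ) (lam : Fin d → ℝ)
    (x₀ : Fin d → ℝ)
    (hQ : IsUnit Q.det)
    (hdiag : A = Q * Matrix.diagonal lam * Q⁻¹)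
    (hlam : Function.Injective lam)
    (hKrylov : LinearIndependent ℝ (fun i : Fin d => (A ^ (i : ℕ)).mulVec x₀))
    (Δt : ℝ) (hΔt : 0 < Δt) (k : ℕ) (hk : 2 ≤ k) :
    LinearIndependent ℝ (fun i : Fin d =>
      (A ^ (i : ℕ)).mulVec
        (((k : ℝ)⁻¹ •
          ∑ m ∈ Finset.range k, NormedSpace.exp (((m : ℝ) * Δt) • A)).mulVec x₀)) :=
  stmt8_general d A Q lam x₀ hQ hdiag hKrylov Δt k hk
end

section
/- Let A ∈ ℝ^{d×d}, x₀ ∈ ℝ^d with {x₀, Ax₀, ..., A^{d-1}x₀} linearly independent, and let W(t) := the d×(d+d²) matrix whose first d columns are exp(At) and whose remaining d² columns are (∂exp(At)/∂a_{jk}) x₀ for j,k = 1,...,d (derivative of the matrix exponential in the (j,k) entry of A). If ξ ∈ ℝ^{d+d²}, written as (ξ_d, Ξ) with ξ_d ∈ ℝ^d and Ξ ∈ ℝ^{d×d}, satisfies W^{(m)}(0) ξ = 0 for all m = 0, 1, ..., d — equivalently A^m ξ_d + Σ_{l=1}^{m} A^{m−l} Ξ A^{l−1} x₀ = 0 for m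 = 0,...,d — then ξ_d = 0 and Ξ = 0. -/
/-!
The case `m = 0` gives `ξ_d = 0`. Writing `D_m := ∑_{l=1}^{m} A^{m-l} Ξ A^{l-1} x₀`, one has
`D_{m+1} = A D_m + Ξ A^m x₀`, so the vanishing of `D_0, …, D_d` forces `Ξ A^m x₀ = 0` for `m < d`.
The Krylov vectors `A^m x₀`, `m < d`, form a basis, hence `Ξ = 0`.
-/

open Matrix Finset

namespace Matrix

lemma eq_zero_of_mulVec_linearIndependent {K n ι : Type*} [Field K] [Fintype n]
    [Fintype ι] {v : ι → n → K} (hv : LinearIndependent K v)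
    (hcard : Fintype.card ι = Fintype.card n) {M : Matrix n n K} (hM : ∀ i, M *ᵥ v i = 0) :
    M = 0 := by
  have hspan := hv.span_eq_top_of_card_eq_finrank'
    (by rw [hcard, Module.finrank_fintype_fun_eq_card])
  have : M.mulVecLin = 0 := LinearMap.ext_on_range hspan fun i => hM i
  exact mulVec_injective (funext fun x => by simpa using LinearMap.congr_fun this x)

variable {n R : Type*} [Fintype n] [DecidableEq n] [CommRing R]

/-- The derivative of `A ↦ A^m` in the direction `Ξ`, applied to `x`. -/
def powDerivMulVec (A Ξ : Matrix n n R) (x : n → R) (m : ℕ) : n → R :=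
  ∑ l ∈ range m, (A ^ (m - 1 - l) * Ξ * A ^ l) *ᵥ x

lemma powDerivMulVec_succ (A Ξ : Matrix n n R) (x : n → R) (m : ℕ) :
    powDerivMulVec A Ξ x (m + 1) = A *ᵥ powDerivMulVec A Ξ x m + Ξ *ᵥ (A ^ m *ᵥ x) := by
  have hpow : ∀ l ∈ range m, A ^ (m - l) = A * A ^ (m - 1 - l) := fun l hl => by
    rw [← pow_succ', show m - 1 - l + 1 = m - l by grind]
  simp only [powDerivMulVec, sum_range_succ, add_tsub_cancel_right, tsub_self, pow_zero,
    one_mul, mulVec_sum, mulVec_mulVec]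
  congr 1
  refine sum_congr rfl fun l hl => ?_
  rw [hpow l hl, Matrix.mul_assoc A, Matrix.mul_assoc A]

end Matrix

/-- Suppose the Krylov vectors `x₀, Ax₀, …, A^{d-1}x₀` are
linearly independent. If `(ξ_d, Ξ)` satisfies
`A^m ξ_d + ∑_{l=1}^{m} A^{m−l} Ξ A^{l−1} x₀ = 0` for all `m = 0, …, d`,
then `ξ_d = 0` and `Ξ = 0`. -/
theorem stmt19 (d : ℕ) (A : Matrix (Fin d) (Fin d) ℝ) (x₀ : Fin d → ℝ)
    (hKrylov : LinearIndependent ℝ (fun i : Fin d => (A ^ (i : ℕ)).mulVec x₀))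
    (ξd : Fin d → ℝ) (Ξ : Matrix (Fin d) (Fin d) ℝ)
    (h : ∀ m : ℕ, m ≤ d →
      (A ^ m).mulVec ξd +
        ∑ l ∈ Finset.range m, (A ^ (m - 1 - l) * Ξ * A ^ l).mulVec x₀ = 0) :
    ξd = 0 ∧ Ξ = 0 := by
  have hξ : ξd = 0 := by simpa using h 0 d.zero_le
  have hderiv : ∀ m ≤ d, powDerivMulVec A Ξ x₀ m = 0 := fun m hm => by
    simpa [hξ, powDerivMulVec] using h m hm
  refine ⟨hξ, eq_zero_of_mulVec_linearIndependent hKrylov rfl fun i => ?_⟩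
  have := powDerivMulVec_succ A Ξ x₀ i
  rwa [hderiv (i + 1) i.isLt, hderiv i i.isLt.le, mulVec_zero, zero_add, eq_comm] at this
end
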